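/- arXiv:2402.05677 — 2 statements merged into one kernel-verified Lean document; each statement's English description precedes it below -/
import Mathlib

section
/- Let m ≥ 3, let a be a primitive element of 𝔽_{2^m} (a generator of 𝔽_{2^m}^*), and let d = 2^m − 2. Define f : 𝔽_{2^m} × 𝔽_{2^m} → ℤ/8ℤ by f(x,y) = ι(Tr(x y^d)) + 2·ι(Tr(x(1+a)y^d)) + 4·ι(Tr(x(1+a^d)y^d)). Then f is gbent, i.e., |Σ_{x,y ∈ 𝔽_{2^m}} ζ₈^{f(x,y)} (−1)^{ι(Tr(ux)) + ι(Tr(vy))}| = 2^m for all u, v ∈ 𝔽_{2^m}. -/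
noncomputable section

/-- The absolute trace Tr(x) = x + x² + x⁴ + … + x^{2^{m−1}}. -/
def Tr {F : Type} [Field F] (m : ℕ) (x : F) : F :=
  ∑ i ∈ Finset.range m, x ^ (2 ^ i)

/-- ι(e): the integer lift of e ∈ {0,1} ⊆ F. -/
def iotaN {F : Type} [Field F] [DecidableEq F] (e : F) : ℕ :=
  if e = 1 then 1 else 0

/-- ι(e) viewed in ℤ/8ℤ. -/
def iota8 {F : Type} [Field F] [DecidableEq F] (e : F) : ZMod 8 :=
  if e = 1 then 1 else 0

/-- ζ₈ = e^{2πi/8}. -/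
def zeta8 : ℂ := Complex.exp (2 * Real.pi * Complex.I / 8)

/-! Write `f x y = h (x * y⁻¹)` with `h z = Tr z + 2 Tr ((1 + a) z) + 4 Tr ((1 + a⁻¹) z)` and let
`ψ z = (-1)^Tr z`, a primitive additive character. For every `g` with `∑ z, g z = 0`, the
substitution `x = y z` followed by character orthogonality gives
`∑ x y, g (x y⁻¹) ψ (u x) ψ (v y) = 2^m g (v / u)` (with `v / 0 = 0`), so it suffices that
`ζ₈^h` is balanced. Since `w^e = (1 + w)/2 + (1 - w)/2 · (-1)^e` for `e ∈ {0, 1}`, `ζ₈^h` is a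
combination of the characters `z ↦ ψ (c z)` with `c ∈ 1 + a⁻¹ + {0, 1, 1 + a, a}`; all these `c`
are nonzero because the primitive element `a` has order `2^m - 1 > 3`. -/
section TraceCharacter

attribute [local instance] ZMod.algebra

variable {F : Type} [Field F] [Fintype F] [CharP F 2]

theorem Tr_eq_algebraMap_trace {m : ℕ} (hF : Fintype.card F = 2 ^ m) (x : F) :
    Tr m x = algebraMap (ZMod 2) F (Algebra.trace (ZMod 2) F x) := by
  have hfinrank : Module.finrank (ZMod 2) F = m := by
    have h := Module.card_eq_pow_finrank (K := ZMod 2) (V := F)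
    rw [ZMod.card, hF] at h
    exact (Nat.pow_right_injective le_rfl h).symm
  rw [FiniteField.algebraMap_trace_eq_sum_pow, hfinrank, Nat.card_zmod]
  rfl

variable (F) in
def traceChar : AddChar F ℂ :=
  (AddChar.zmodChar 2 (by norm_num : (-1 : ℂ) ^ 2 = 1)).compAddMonoidHom
    (Algebra.trace (ZMod 2) F).toAddMonoidHom

theorem traceChar_apply [DecidableEq F] {m : ℕ} (hF : Fintype.card F = 2 ^ m) (x : F) :
    traceChar F x = (-1) ^ iotaN (Tr m x) := by
  rw [traceChar, AddChar.compAddMonoidHom_apply, AddChar.zmodChar_apply,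
    LinearMap.toAddMonoidHom_coe, Tr_eq_algebraMap_trace hF]
  obtain h | h : Algebra.trace (ZMod 2) F x = 0 ∨ Algebra.trace (ZMod 2) F x = 1 :=
    (by decide : ∀ t : ZMod 2, t = 0 ∨ t = 1) _
  all_goals simp [h, iotaN, ZMod.val_one]

theorem traceChar_isPrimitive : (traceChar F).IsPrimitive := by
  refine AddChar.IsPrimitive.of_ne_one fun h => ?_
  obtain ⟨x, hx⟩ := Algebra.trace_surjective (ZMod 2) F 1
  have h1 := DFunLike.congr_fun h x
  simp [traceChar, hx, AddChar.zmodChar_apply, ZMod.val_one] at h1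
  norm_num at h1

end TraceCharacter

theorem charP_two_of_card_eq_two_pow {F : Type*} [Field F] [Fintype F] {m : ℕ}
    (hF : Fintype.card F = 2 ^ m) : CharP F 2 := by
  refine CharTwo.of_one_ne_zero_of_two_eq_zero one_ne_zero ((pow_eq_zero_iff' (n := m)).mp ?_).1
  exact_mod_cast hF ▸ FiniteField.cast_card_eq_zero F

theorem FiniteField.pow_card_sub_two_eq_inv {K : Type*} [GroupWithZero K] [Fintype K]
    (hK : 2 < Fintype.card K) (x : K) : x ^ (Fintype.card K - 2) = x⁻¹ := by
  rcases eq_or_ne x 0 with rfl | hx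
  · rw [inv_zero, zero_pow (by omega)]
  · refine eq_inv_of_mul_eq_one_left ?_
    rw [← pow_succ, show Fintype.card K - 2 + 1 = Fintype.card K - 1 by omega,
      FiniteField.pow_card_sub_one_eq_one x hx]

section Generator

variable {F : Type*} [Field F] [Fintype F] {a : F}

theorem card_le_succ_of_pow_eq_one (ha : ∀ x : F, x ≠ 0 → ∃ j : ℕ, a ^ j = x) {k : ℕ}
    (hk : 0 < k) (hak : a ^ k = 1) : Fintype.card F ≤ k + 1 := by
  classical
  have hcover : (Finset.univ : Finset F) ⊆ insert 0 ((Finset.range k).image (a ^ ·)) := by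
    intro x _
    rcases eq_or_ne x 0 with rfl | hx
    · exact Finset.mem_insert_self _ _
    · obtain ⟨j, rfl⟩ := ha x hx
      refine Finset.mem_insert_of_mem (Finset.mem_image.mpr ⟨j % k, ?_, ?_⟩)
      · exact Finset.mem_range.mpr (Nat.mod_lt j hk)
      · exact (pow_eq_pow_mod j hak).symm
  calc Fintype.card F = (Finset.univ : Finset F).card := Finset.card_univ.symm
    _ ≤ _ := Finset.card_le_card hcover
    _ ≤ ((Finset.range k).image (a ^ ·)).card + 1 := Finset.card_insert_le _ _
    _ ≤ k + 1 := by grw [Finset.card_image_le, Finset.card_range]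

theorem ne_zero_of_forall_eq_pow (ha : ∀ x : F, x ≠ 0 → ∃ j : ℕ, a ^ j = x)
    (hF : 2 < Fintype.card F) : a ≠ 0 := by
  classical
  rintro rfl
  have hcover : (Finset.univ : Finset F) ⊆ {0, 1} := by
    intro x _
    rcases eq_or_ne x 0 with rfl | hx
    · simp
    · obtain ⟨j, rfl⟩ := ha x hx
      rcases j with _ | j <;> simp
  have := Finset.card_le_card hcover
  grw [Finset.card_univ, Finset.card_le_two] at this
  omega

end Generator

theorem zeta8_pow_four : zeta8 ^ 4 = -1 := by
  rw [zeta8, ← Complex.exp_nat_mul, ← Complex.exp_pi_mul_I]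
  push_cast
  ring_nf

theorem norm_zeta8 : ‖zeta8‖ = 1 := by
  rw [zeta8, show 2 * Real.pi * Complex.I / 8 = ((Real.pi / 4 : ℝ) : ℂ) * Complex.I by
    push_cast; ring, Complex.norm_exp_ofReal_mul_I]

theorem pow_eq_affine_neg_one_pow_of_le_one {K : Type*} [Field K] [NeZero (2 : K)] (w : K)
    {n : ℕ} (hn : n ≤ 1) :
    w ^ n = (1 + w) / 2 + (1 - w) / 2 * (-1) ^ n := by
  interval_cases n <;> field_simp <;> ring

theorem zeta8_pow_eq_affine_mul_affine {n₁ n₂ n₃ : ℕ} (h₁ : n₁ ≤ 1) (h₂ : n₂ ≤ 1) :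
    zeta8 ^ (n₁ + 2 * n₂ + 4 * n₃) =
      ((1 + zeta8) / 2 + (1 - zeta8) / 2 * (-1) ^ n₁) *
        ((1 + zeta8 ^ 2) / 2 + (1 - zeta8 ^ 2) / 2 * (-1) ^ n₂) * (-1) ^ n₃ := by
  rw [pow_add, pow_add, pow_mul, pow_mul, zeta8_pow_four,
    ← pow_eq_affine_neg_one_pow_of_le_one _ h₁, ← pow_eq_affine_neg_one_pow_of_le_one _ h₂]

section Bits

variable {F : Type} [Field F] [DecidableEq F]

theorem iotaN_le_one (e : F) : iotaN e ≤ 1 := by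
  unfold iotaN; split_ifs <;> omega

theorem val_iota8_add (e₁ e₂ e₃ : F) :
    (iota8 e₁ + 2 * iota8 e₂ + 4 * iota8 e₃).val = iotaN e₁ + 2 * iotaN e₂ + 4 * iotaN e₃ := by
  have hcast : ∀ e : F, iota8 e = (iotaN e : ZMod 8) := fun e => by
    unfold iota8 iotaN; split_ifs <;> simp
  simp only [hcast]
  have := iotaN_le_one e₁; have := iotaN_le_one e₂; have := iotaN_le_one e₃
  exact_mod_cast ZMod.val_cast_of_lt (by omega)

end Bits

section CharacterSums

variable {F R : Type*} [Field F] [Fintype F] [DecidableEq F] [CommRing R] [IsDomain R]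
  {ψ : AddChar F R}

theorem sum_char_mul_eq_zero (hψ : ψ.IsPrimitive) {c : F} (hc : c ≠ 0) :
    ∑ z, ψ (c * z) = 0 := by
  simpa [hc, mul_comm] using AddChar.sum_mulShift c hψ

theorem sum_affine_mul_affine_mul_char_eq_zero (hψ : ψ.IsPrimitive) (α β γ δ : R) {b₁ b₂ c : F}
    (h₀ : c ≠ 0) (h₁ : b₁ + c ≠ 0) (h₂ : b₂ + c ≠ 0) (h₁₂ : b₁ + b₂ + c ≠ 0) :
    ∑ z, (α + β * ψ (b₁ * z)) * (γ + δ * ψ (b₂ * z)) * ψ (c * z) = 0 := by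
  have hexpand : ∀ z, (α + β * ψ (b₁ * z)) * (γ + δ * ψ (b₂ * z)) * ψ (c * z) =
      α * γ * ψ (c * z) + β * γ * ψ ((b₁ + c) * z) + α * δ * ψ ((b₂ + c) * z) +
        β * δ * ψ ((b₁ + b₂ + c) * z) := fun z => by
    simp only [add_mul, AddChar.map_add_eq_mul]
    ring
  simp only [hexpand, Finset.sum_add_distrib, ← Finset.mul_sum, sum_char_mul_eq_zero hψ, h₀, h₁,
    h₂, h₁₂, ne_eq, not_false_eq_true, mul_zero, add_zero]

-- For `u = 0` the right-hand side is `card F * g 0`, through `0⁻¹ = 0`.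
theorem sum_sum_mul_inv_mul_char (hψ : ψ.IsPrimitive) (g : F → R) (hg : ∑ z, g z = 0) (u v : F) :
    ∑ x, ∑ y, g (x * y⁻¹) * (ψ (u * x) * ψ (v * y)) = Fintype.card F * g (-(v * u⁻¹)) := by
  set A : F → R := fun y => ∑ x, g (x * y⁻¹) * (ψ (u * x) * ψ (v * y))
  set B : F → R := fun y => ∑ z, g z * ψ (y * (u * z + v))
  have hAB : ∀ y ≠ 0, A y = B y := fun y hy => by
    simp only [A, B]
    rw [← Equiv.sum_comp (Equiv.mulRight₀ y hy)]
    refine Finset.sum_congr rfl fun z _ => ?_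
    simp only [Equiv.mulRight₀_apply, mul_inv_cancel_right₀ hy, ← AddChar.map_add_eq_mul]
    ring_nf
  have hA₀ : A 0 = g 0 * if u = 0 then (Fintype.card F : R) else 0 := by
    simp only [A, inv_zero, mul_zero, AddChar.map_zero_eq_one, mul_one, ← Finset.mul_sum,
      mul_comm u, AddChar.sum_mulShift _ hψ, Nat.cast_ite, Nat.cast_zero]
  have hB₀ : B 0 = 0 := by simp [B, hg]
  have hB : ∑ y, B y = ∑ z, g z * if u * z + v = 0 then (Fintype.card F : R) else 0 := by
    rw [Finset.sum_comm]
    simp only [← Finset.mul_sum, AddChar.sum_mulShift _ hψ, Nat.cast_ite, Nat.cast_zero]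
  have hsplit : ∑ y, A y = A 0 + ∑ y, B y := by
    rw [Fintype.sum_eq_add_sum_compl 0 A, Fintype.sum_eq_add_sum_compl 0 B, hB₀, zero_add]
    exact congrArg _ (Finset.sum_congr rfl fun y hy => hAB y (by simpa using hy))
  rw [Finset.sum_comm, hsplit, hA₀, hB]
  rcases eq_or_ne u 0 with rfl | hu
  · simp [← Finset.sum_mul, hg, mul_comm]
  · have hroot : ∀ z, u * z + v = 0 ↔ z = -(v * u⁻¹) := fun z => by
      rw [eq_neg_iff_add_eq_zero, ← mul_eq_zero_iff_right hu (a := z + v * u⁻¹), add_mul,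
        inv_mul_cancel_right₀ hu, mul_comm z]
    simp [hroot, hu, mul_comm]

end CharacterSums

theorem sum_zeta8_pow_trace_eq_zero {F : Type} [Field F] [Fintype F] [DecidableEq F] [CharP F 2]
    {m : ℕ} (hF : Fintype.card F = 2 ^ m) {b c : F} (h₀ : c ≠ 0) (h₁ : 1 + c ≠ 0)
    (h₂ : b + c ≠ 0) (h₁₂ : 1 + b + c ≠ 0) :
    ∑ z : F, zeta8 ^ (iotaN (Tr m z) + 2 * iotaN (Tr m (b * z)) + 4 * iotaN (Tr m (c * z))) =
      0 := by
  rw [← sum_affine_mul_affine_mul_char_eq_zero traceChar_isPrimitive ((1 + zeta8) / 2)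
    ((1 - zeta8) / 2) ((1 + zeta8 ^ 2) / 2) ((1 - zeta8 ^ 2) / 2) h₀ h₁ h₂ h₁₂]
  refine Finset.sum_congr rfl fun z _ => ?_
  rw [zeta8_pow_eq_affine_mul_affine (iotaN_le_one _) (iotaN_le_one _), one_mul, traceChar_apply hF,
    traceChar_apply hF, traceChar_apply hF]

theorem one_add_inv_add_span_ne_zero {F : Type*} [Field F] [CharP F 2] {a : F} (ha₀ : a ≠ 0)
    (ha₁ : a ≠ 1) (ha₃ : a ^ 3 ≠ 1) :
    1 + a⁻¹ ≠ 0 ∧ 1 + (1 + a⁻¹) ≠ 0 ∧ 1 + a + (1 + a⁻¹) ≠ 0 ∧ 1 + (1 + a) + (1 + a⁻¹) ≠ 0 := by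
  have h2 : (2 : F) = 0 := CharTwo.two_eq_zero
  have hinv : a * a⁻¹ = 1 := mul_inv_cancel₀ ha₀
  refine ⟨fun h => ha₁ ?_, fun h => inv_ne_zero ha₀ ?_, fun h => ha₁ ?_, fun h => ha₃ ?_⟩
  · linear_combination a * h - hinv - h2
  · linear_combination h - h2
  · have hsq : (a - 1) ^ 2 = 0 := by linear_combination a * h - hinv - 2 * a * h2
    exact sub_eq_zero.mp (pow_eq_zero_iff two_ne_zero |>.mp hsq)
  · linear_combination (a - 1) * (a * h - hinv - a * h2)

/-- Let m ≥ 3, a a primitive element of 𝔽_{2^m}, d = 2^m − 2.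
Then f(x,y) = ι(Tr(x y^d)) + 2·ι(Tr(x(1+a)y^d)) + 4·ι(Tr(x(1+a^d)y^d))
is gbent: |Σ_{x,y} ζ₈^{f(x,y)} (−1)^{ι(Tr(ux))+ι(Tr(vy))}| = 2^m for all u,v. -/
theorem stmt14 {F : Type} [Field F] [Fintype F] [DecidableEq F] (m : ℕ)
    (hm : 3 ≤ m) (hF : Fintype.card F = 2 ^ m)
    (a : F) (ha : ∀ x : F, x ≠ 0 → ∃ j : ℕ, a ^ j = x)
    (f : F → F → ZMod 8)
    (hf : ∀ x y, f x y =
      iota8 (Tr m (x * y ^ (2 ^ m - 2))) +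
      2 * iota8 (Tr m (x * (1 + a) * y ^ (2 ^ m - 2))) +
      4 * iota8 (Tr m (x * (1 + a ^ (2 ^ m - 2)) * y ^ (2 ^ m - 2)))) :
    ∀ u v : F,
      ‖(∑ x : F, ∑ y : F,
        zeta8 ^ (f x y).val *
          (-1 : ℂ) ^ (iotaN (Tr m (u * x)) + iotaN (Tr m (v * y))))‖ =
        2 ^ m := by
  intro u v
  have hcard : 4 < Fintype.card F :=
    hF ▸ lt_of_lt_of_le (by norm_num) (Nat.pow_le_pow_right two_pos hm)
  have := charP_two_of_card_eq_two_pow hF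
  have hinv (y : F) : y ^ (2 ^ m - 2) = y⁻¹ :=
    hF ▸ FiniteField.pow_card_sub_two_eq_inv (by omega) y
  obtain ⟨ha₀, ha₁, ha₃⟩ : a ≠ 0 ∧ a ≠ 1 ∧ a ^ 3 ≠ 1 :=
    ⟨ne_zero_of_forall_eq_pow ha (by omega),
      fun h => by have := card_le_succ_of_pow_eq_one ha one_pos (by rw [h, one_pow]); omega,
      fun h => by have := card_le_succ_of_pow_eq_one ha three_pos h; omega⟩
  obtain ⟨h₀, h₁, h₂, h₁₂⟩ := one_add_inv_add_span_ne_zero ha₀ ha₁ ha₃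
  set g : F → ℂ := fun z => zeta8 ^ (iotaN (Tr m z) + 2 * iotaN (Tr m ((1 + a) * z)) +
    4 * iotaN (Tr m ((1 + a⁻¹) * z)))
  have hterm (x y : F) :
      zeta8 ^ (f x y).val * (-1 : ℂ) ^ (iotaN (Tr m (u * x)) + iotaN (Tr m (v * y))) =
        g (x * y⁻¹) * (traceChar F (u * x) * traceChar F (v * y)) := by
    rw [hf, val_iota8_add, pow_add (-1 : ℂ), traceChar_apply hF, traceChar_apply hF, hinv, hinv]
    simp only [g, mul_assoc, mul_left_comm x]
  simp only [hterm]
  have hg : ∑ z, g z = 0 := sum_zeta8_pow_trace_eq_zero hF h₀ h₁ h₂ h₁₂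
  rw [sum_sum_mul_inv_mul_char traceChar_isPrimitive g hg, norm_mul, norm_pow, norm_zeta8, one_pow,
    mul_one, hF]
  simp
end
end

section
/- Let m ≥ 3 and let d be a positive integer with d² ≡ 1 (mod 2^m−1). Let α₁, α₂, α₃ ∈ 𝔽_{2^m}^* be pairwise distinct with α_i^{d+1} = 1, and let α₄ = α₁+α₂+α₃ with α₄^{d+1} = 1. For i = 1,2,3,4, set π_i(y) = α_i y^d, h_i(y) = Tr(α_i y^d) and f_i(x,y) = Tr(x π_i(y)) + h_i(y) (values in {0,1} ⊆ 𝔽_{2^m}). Then: (i) f₁(x,y)+f₂(x,y)+f₃(x,y)+f₄(x,y) = 0 for all x, y ∈ 𝔽_{2^m}; and (ii) h₁(π₁(y))+h₂(π₂(y))+h₃(π₃(y))+h₄(π₄(y)) = 0 for all y ∈ 𝔽_{2^m} (here each π_i is its own inverse, so this is the condition Σᵢ h_i(π_i^{−1}(y)) = 0). -/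
/-!
A field of order 2^m has characteristic 2, where the trace is additive. Since
α₁ + α₂ + α₃ + α₄ = 0, the traces Tr(α_i u) cancel for every u, which gives (i) with u = x y^d and
u = y^d. For (ii), h_i(π_i(y)) = Tr(α_i^{d+1} y^{d²}) = Tr(y^{d²}) is the same for all four i, so the
terms cancel in pairs.
-/

noncomputable section

theorem Tr_zero {F : Type} [Field F] (m : ℕ) : Tr m (0 : F) = 0 := by
  simp [Tr]

section CharTwo

variable {F : Type} [Field F] [CharP F 2]

theorem Tr_add (m : ℕ) (a b : F) : Tr m (a + b) = Tr m a + Tr m b := by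
  simp only [Tr, ← Finset.sum_add_distrib, add_pow_char_pow]

theorem Tr_mul_add_four_eq_zero (m : ℕ) {α₁ α₂ α₃ α₄ : F} (hα : α₄ = α₁ + α₂ + α₃) (u : F) :
    Tr m (α₁ * u) + Tr m (α₂ * u) + Tr m (α₃ * u) + Tr m (α₄ * u) = 0 := by
  have hsum : α₁ * u + α₂ * u + α₃ * u + α₄ * u = 0 := by
    rw [hα]
    linear_combination (α₁ + α₂ + α₃) * u * CharTwo.two_eq_zero (R := F)
  rw [← Tr_add, ← Tr_add, ← Tr_add, hsum, Tr_zero]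

end CharTwo

theorem mul_mul_pow_pow_eq_pow_mul {M : Type} [CommMonoid M] {a : M} {d : ℕ}
    (ha : a ^ (d + 1) = 1) (y : M) : a * (a * y ^ d) ^ d = y ^ (d * d) := by
  rw [mul_pow, ← pow_mul, ← mul_assoc, ← pow_succ', ha, one_mul]

theorem stmt15_general {F : Type} [Field F] [Fintype F] (m d : ℕ)
    (hF : Fintype.card F = 2 ^ m)
    (α₁ α₂ α₃ α₄ : F)
    (h1 : α₁ ^ (d + 1) = 1) (h2 : α₂ ^ (d + 1) = 1) (h3 : α₃ ^ (d + 1) = 1)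
    (h4def : α₄ = α₁ + α₂ + α₃) (h4 : α₄ ^ (d + 1) = 1)
    (π₁ π₂ π₃ π₄ : F → F) (h₁ h₂ h₃ h₄ : F → F) (f₁ f₂ f₃ f₄ : F → F → F)
    (hp1 : ∀ y, π₁ y = α₁ * y ^ d) (hp2 : ∀ y, π₂ y = α₂ * y ^ d)
    (hp3 : ∀ y, π₃ y = α₃ * y ^ d) (hp4 : ∀ y, π₄ y = α₄ * y ^ d)
    (hh1 : ∀ y, h₁ y = Tr m (α₁ * y ^ d)) (hh2 : ∀ y, h₂ y = Tr m (α₂ * y ^ d))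
    (hh3 : ∀ y, h₃ y = Tr m (α₃ * y ^ d)) (hh4 : ∀ y, h₄ y = Tr m (α₄ * y ^ d))
    (hf1 : ∀ x y, f₁ x y = Tr m (x * π₁ y) + h₁ y)
    (hf2 : ∀ x y, f₂ x y = Tr m (x * π₂ y) + h₂ y)
    (hf3 : ∀ x y, f₃ x y = Tr m (x * π₃ y) + h₃ y)
    (hf4 : ∀ x y, f₄ x y = Tr m (x * π₄ y) + h₄ y) :
    (∀ x y : F, f₁ x y + f₂ x y + f₃ x y + f₄ x y = 0) ∧
    (∀ y : F, h₁ (π₁ y) + h₂ (π₂ y) + h₃ (π₃ y) + h₄ (π₄ y) = 0) := by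
  have : CharP F 2 := charP_of_card_eq_prime_pow hF
  constructor
  · intro x y
    simp only [hf1, hf2, hf3, hf4, hh1, hh2, hh3, hh4, hp1, hp2, hp3, hp4, mul_left_comm x]
    linear_combination Tr_mul_add_four_eq_zero m h4def (x * y ^ d) +
      Tr_mul_add_four_eq_zero m h4def (y ^ d)
  · intro y
    simp only [hp1, hp2, hp3, hp4, hh1, hh2, hh3, hh4, mul_mul_pow_pow_eq_pow_mul h1,
      mul_mul_pow_pow_eq_pow_mul h2, mul_mul_pow_pow_eq_pow_mul h3, mul_mul_pow_pow_eq_pow_mul h4,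
      CharTwo.add_self_eq_zero, zero_add]

/-- Let m ≥ 3, d² ≡ 1 (mod 2^m−1), α₁,α₂,α₃ ∈ 𝔽_{2^m}^* pairwise distinct with
α_i^{d+1} = 1, and α₄ = α₁+α₂+α₃ with α₄^{d+1} = 1. For π_i(y) = α_i y^d,
h_i(y) = Tr(α_i y^d), f_i(x,y) = Tr(x π_i(y)) + h_i(y), we have
(i) f₁+f₂+f₃+f₄ = 0, and (ii) h₁(π₁(y))+h₂(π₂(y))+h₃(π₃(y))+h₄(π₄(y)) = 0
(each π_i being its own inverse, this is Σᵢ h_i(π_i^{−1}(y)) = 0). -/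
theorem stmt15 {F : Type} [Field F] [Fintype F] (m d : ℕ)
    (hm : 3 ≤ m) (hF : Fintype.card F = 2 ^ m)
    (hd : 1 ≤ d) (hdd : d ^ 2 ≡ 1 [MOD 2 ^ m - 1])
    (α₁ α₂ α₃ α₄ : F)
    (h10 : α₁ ≠ 0) (h20 : α₂ ≠ 0) (h30 : α₃ ≠ 0)
    (h12 : α₁ ≠ α₂) (h13 : α₁ ≠ α₃) (h23 : α₂ ≠ α₃)
    (h1 : α₁ ^ (d + 1) = 1) (h2 : α₂ ^ (d + 1) = 1) (h3 : α₃ ^ (d + 1) = 1)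
    (h4def : α₄ = α₁ + α₂ + α₃) (h4 : α₄ ^ (d + 1) = 1)
    (π₁ π₂ π₃ π₄ : F → F) (h₁ h₂ h₃ h₄ : F → F) (f₁ f₂ f₃ f₄ : F → F → F)
    (hp1 : ∀ y, π₁ y = α₁ * y ^ d) (hp2 : ∀ y, π₂ y = α₂ * y ^ d)
    (hp3 : ∀ y, π₃ y = α₃ * y ^ d) (hp4 : ∀ y, π₄ y = α₄ * y ^ d)
    (hh1 : ∀ y, h₁ y = Tr m (α₁ * y ^ d)) (hh2 : ∀ y, h₂ y = Tr m (α₂ * y ^ d))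
    (hh3 : ∀ y, h₃ y = Tr m (α₃ * y ^ d)) (hh4 : ∀ y, h₄ y = Tr m (α₄ * y ^ d))
    (hf1 : ∀ x y, f₁ x y = Tr m (x * π₁ y) + h₁ y)
    (hf2 : ∀ x y, f₂ x y = Tr m (x * π₂ y) + h₂ y)
    (hf3 : ∀ x y, f₃ x y = Tr m (x * π₃ y) + h₃ y)
    (hf4 : ∀ x y, f₄ x y = Tr m (x * π₄ y) + h₄ y) :
    (∀ x y : F, f₁ x y + f₂ x y + f₃ x y + f₄ x y = 0) ∧
    (∀ y : F, h₁ (π₁ y) + h₂ (π₂ y) + h₃ (π₃ y) + h₄ (π₄ y) = 0) :=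
  stmt15_general m d hF α₁ α₂ α₃ α₄ h1 h2 h3 h4def h4 π₁ π₂ π₃ π₄ h₁ h₂ h₃ h₄ f₁ f₂ f₃ f₄ hp1 hp2
    hp3 hp4 hh1 hh2 hh3 hh4 hf1 hf2 hf3 hf4
end
end
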